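/- Let f : X → Y be a q-quasi-isometry of metric spaces. Then f induces a bijection between the quotients by linear equivalence of the unbounded subsets of X and of Y which is bi-Lipschitz with respect to the metric t: q⁻¹·t_X(ζ,ξ) ≤ t_Y(f(ζ),f(ξ)) ≤ q·t_X(ζ,ξ). -/
import Mathlib

open Metric Set Bornology Filter

def cone {X : Type*} [MetricSpace X] (o : X) (R : Set X) (α a : ℝ) : Set X :=
  ⋃ x ∈ R, Metric.closedBall x (α * dist o x + a)

noncomputable def sPlus {X : Type*} [MetricSpace X] (o : X) (R S : Set X) : ℝ :=
  sInf {α : ℝ | 0 ≤ α ∧ ∃ a : ℝ, 0 ≤ a ∧ S ⊆ cone o R α a}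

noncomputable def sFun {X : Type*} [MetricSpace X] (o : X) (R S : Set X) : ℝ :=
  max (sPlus o R S) (sPlus o S R)

noncomputable def tFun {X : Type*} [MetricSpace X] (o : X) (R S : Set X) : ℝ :=
  Real.sqrt (sFun o R S)

section Aux

variable {X Y : Type*} [MetricSpace X] [MetricSpace Y]

lemma sPlus_nonneg' (o : X) (R S : Set X) : 0 ≤ sPlus o R S :=
  Real.sInf_nonneg (fun _ h => h.1)

lemma sFun_nonneg' (o : X) (R S : Set X) : 0 ≤ sFun o R S :=
  le_max_of_le_left (sPlus_nonneg' o R S)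

lemma mem_cone_iff {o : X} {R : Set X} {α a : ℝ} {s : X} :
    s ∈ cone o R α a ↔ ∃ r ∈ R, dist s r ≤ α * dist o r + a := by
  simp [cone, mem_iUnion, exists_prop, mem_closedBall]

lemma sInf_mul_lemma (A B : Set ℝ) (c : ℝ) (hc : 0 < c)
    (hAB : ∀ α ∈ A, c * α ∈ B) (hBA : ∀ β ∈ B, c * β ∈ A)
    (hB0 : ∀ β ∈ B, 0 ≤ β) : sInf B ≤ c * sInf A := by
  rcases A.eq_empty_or_nonempty with hA | hA
  · have hBe : B = ∅ := by
      by_contra h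
      obtain ⟨β, hβ⟩ := nonempty_iff_ne_empty.2 h
      exact absurd (hBA β hβ) (by simp [hA])
    simp [hA, hBe, Real.sInf_empty]
  · have h1 : ∀ α ∈ A, sInf B ≤ c * α := fun α hα => csInf_le ⟨0, hB0⟩ (hAB α hα)
    have h2 : sInf B / c ≤ sInf A :=
      le_csInf hA (fun α hα => (div_le_iff₀ hc).2 ((h1 α hα).trans_eq (mul_comm c α)))
    calc sInf B = (sInf B / c) * c := by field_simp
      _ ≤ sInf A * c := mul_le_mul_of_nonneg_right h2 hc.le
      _ = c * sInf A := mul_comm _ _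

variable {f : X → Y} {q : ℝ} (hq : 0 < q)
    (hlow : ∀ x x' : X, q⁻¹ * dist x x' - q ≤ dist (f x) (f x'))
    (hupp : ∀ x x' : X, dist (f x) (f x') ≤ q * dist x x' + q)

include hq hlow hupp

lemma cone_push {o : X} {R S : Set X} {α a : ℝ} (hα : 0 ≤ α) (_ha : 0 ≤ a)
    (h : S ⊆ cone o R α a) :
    f '' S ⊆ cone (f o) (f '' R) (q ^ 2 * α) (q ^ 3 * α + q * a + q) := by
  rintro _ ⟨s, hs, rfl⟩
  obtain ⟨r, hr, hsr⟩ := mem_cone_iff.1 (h hs)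
  rw [mem_cone_iff]
  refine ⟨f r, mem_image_of_mem f hr, ?_⟩
  have h1 : dist (f s) (f r) ≤ q * dist s r + q := hupp s r
  have h2 : dist o r ≤ q * dist (f o) (f r) + q ^ 2 := by
    have h3 := hlow o r
    have hqi : q * q⁻¹ = 1 := mul_inv_cancel₀ hq.ne'
    nlinarith [dist_nonneg (x := o) (y := r)]
  have hB : α * dist o r ≤ α * (q * dist (f o) (f r) + q ^ 2) :=
    mul_le_mul_of_nonneg_left h2 hα
  nlinarith [dist_nonneg (x := f o) (y := f r)]

lemma cone_pull {o : X} {R S : Set X} {α a : ℝ} (hα : 0 ≤ α) (_ha : 0 ≤ a)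
    (h : f '' S ⊆ cone (f o) (f '' R) α a) :
    S ⊆ cone o R (q ^ 2 * α) (q ^ 2 * α + q * a + q ^ 2) := by
  intro s hs
  obtain ⟨y, ⟨r, hr, rfl⟩, hsr⟩ := mem_cone_iff.1 (h (mem_image_of_mem f hs))
  rw [mem_cone_iff]
  refine ⟨r, hr, ?_⟩
  have h1 : dist s r ≤ q * dist (f s) (f r) + q ^ 2 := by
    have h3 := hlow s r
    have hqi : q * q⁻¹ = 1 := mul_inv_cancel₀ hq.ne'
    nlinarith [dist_nonneg (x := s) (y := r)]
  have h3 : dist (f o) (f r) ≤ q * dist o r + q := hupp o r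
  have hB : α * dist (f o) (f r) ≤ α * (q * dist o r + q) :=
    mul_le_mul_of_nonneg_left h3 hα
  nlinarith [dist_nonneg (x := f s) (y := f r)]

lemma sPlus_push (o : X) (R S : Set X) :
    sPlus (f o) (f '' R) (f '' S) ≤ q ^ 2 * sPlus o R S := by
  apply sInf_mul_lemma _ _ _ (by positivity)
  · rintro α ⟨hα, a, ha, hsub⟩
    exact ⟨by positivity, q ^ 3 * α + q * a + q, by positivity,
      cone_push hq hlow hupp hα ha hsub⟩
  · rintro β ⟨hβ, a, ha, hsub⟩
    exact ⟨by positivity, q ^ 2 * β + q * a + q ^ 2, by positivity,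
      cone_pull hq hlow hupp hβ ha hsub⟩
  · exact fun β h => h.1

lemma sPlus_pull (o : X) (R S : Set X) :
    sPlus o R S ≤ q ^ 2 * sPlus (f o) (f '' R) (f '' S) := by
  apply sInf_mul_lemma _ _ _ (by positivity)
  · rintro β ⟨hβ, a, ha, hsub⟩
    exact ⟨by positivity, q ^ 2 * β + q * a + q ^ 2, by positivity,
      cone_pull hq hlow hupp hβ ha hsub⟩
  · rintro α ⟨hα, a, ha, hsub⟩
    exact ⟨by positivity, q ^ 3 * α + q * a + q, by positivity,
      cone_push hq hlow hupp hα ha hsub⟩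
  · exact fun β h => h.1

lemma sFun_push (o : X) (R S : Set X) :
    sFun (f o) (f '' R) (f '' S) ≤ q ^ 2 * sFun o R S := by
  refine max_le ?_ ?_
  · exact (sPlus_push hq hlow hupp o R S).trans
      (mul_le_mul_of_nonneg_left (le_max_left _ _) (by positivity))
  · exact (sPlus_push hq hlow hupp o S R).trans
      (mul_le_mul_of_nonneg_left (le_max_right _ _) (by positivity))

lemma sFun_pull (o : X) (R S : Set X) :
    sFun o R S ≤ q ^ 2 * sFun (f o) (f '' R) (f '' S) := by
  refine max_le ?_ ?_
  · exact (sPlus_pull hq hlow hupp o R S).trans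
      (mul_le_mul_of_nonneg_left (le_max_left _ _) (by positivity))
  · exact (sPlus_pull hq hlow hupp o S R).trans
      (mul_le_mul_of_nonneg_left (le_max_right _ _) (by positivity))

end Aux

/-- A `q`-quasi-isometry induces a bijection of the quotients by linear equivalence,
bi-Lipschitz for `t`; stated on representatives: `R ↦ f '' R` preserves unboundedness,
respects and reflects linear equivalence (well-definedness and injectivity on classes),
is surjective up to linear equivalence, and satisfies the bi-Lipschitz estimates. -/
theorem stmt10 {X Y : Type*} [MetricSpace X] [MetricSpace Y]
    (f : X → Y) (q : ℝ) (hq : 0 < q)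
    (hlow : ∀ x x' : X, q⁻¹ * dist x x' - q ≤ dist (f x) (f x'))
    (hupp : ∀ x x' : X, dist (f x) (f x') ≤ q * dist x x' + q)
    (hcobdd : ∀ y : Y, ∃ x : X, dist y (f x) ≤ q) (o : X) :
    (∀ R S : Set X, ¬ Bornology.IsBounded R → ¬ Bornology.IsBounded S →
      ¬ Bornology.IsBounded (f '' R) ∧
      (sFun o R S = 0 ↔ sFun (f o) (f '' R) (f '' S) = 0) ∧
      q⁻¹ * tFun o R S ≤ tFun (f o) (f '' R) (f '' S) ∧
      tFun (f o) (f '' R) (f '' S) ≤ q * tFun o R S) ∧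
    (∀ T : Set Y, ¬ Bornology.IsBounded T →
      ∃ R : Set X, ¬ Bornology.IsBounded R ∧ sFun (f o) (f '' R) T = 0) := by
  have hqi : q * q⁻¹ = 1 := mul_inv_cancel₀ hq.ne'
  constructor
  · intro R S hR hS
    refine ⟨?_, ?_, ?_, ?_⟩
    · -- unboundedness of the image
      intro hb
      apply hR
      obtain ⟨M, hM⟩ := (isBounded_iff_subset_closedBall (f o)).1 hb
      refine (isBounded_iff_subset_closedBall o).2 ⟨q * (M + q), fun x hx => ?_⟩
      have h1 : dist (f x) (f o) ≤ M := hM (mem_image_of_mem f hx)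
      have h2 := hlow x o
      rw [mem_closedBall]
      nlinarith [dist_nonneg (x := x) (y := o)]
    · -- linear equivalence is preserved and reflected
      constructor
      · intro h0
        have h1 := sFun_push hq hlow hupp o R S
        rw [h0, mul_zero] at h1
        exact le_antisymm h1 (sFun_nonneg' _ _ _)
      · intro h0
        have h1 := sFun_pull hq hlow hupp o R S
        rw [h0, mul_zero] at h1
        exact le_antisymm h1 (sFun_nonneg' _ _ _)
    · -- lower Lipschitz bound
      have h3 : tFun o R S ≤ q * tFun (f o) (f '' R) (f '' S) := by
        calc tFun o R S ≤ Real.sqrt (q ^ 2 * sFun (f o) (f '' R) (f '' S)) :=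
              Real.sqrt_le_sqrt (sFun_pull hq hlow hupp o R S)
          _ = q * tFun (f o) (f '' R) (f '' S) := by
              rw [tFun, Real.sqrt_mul (sq_nonneg q), Real.sqrt_sq hq.le]
      rw [inv_mul_le_iff₀ hq]
      exact h3
    · -- upper Lipschitz bound
      calc tFun (f o) (f '' R) (f '' S) ≤ Real.sqrt (q ^ 2 * sFun o R S) :=
            Real.sqrt_le_sqrt (sFun_push hq hlow hupp o R S)
        _ = q * tFun o R S := by
            rw [tFun, Real.sqrt_mul (sq_nonneg q), Real.sqrt_sq hq.le]
  · -- surjectivity up to linear equivalence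
    intro T hT
    choose g hg using hcobdd
    refine ⟨g '' T, ?_, ?_⟩
    · -- g '' T is unbounded
      intro hb
      apply hT
      obtain ⟨M, hM⟩ := (isBounded_iff_subset_closedBall o).1 hb
      refine (isBounded_iff_subset_closedBall (f o)).2 ⟨q + (q * M + q), fun y hy => ?_⟩
      have h1 : dist (g y) o ≤ M := hM (mem_image_of_mem g hy)
      have h2 : dist (f (g y)) (f o) ≤ q * dist (g y) o + q := hupp (g y) o
      have h3 : dist y (f (g y)) ≤ q := hg y
      rw [mem_closedBall]
      calc dist y (f o) ≤ dist y (f (g y)) + dist (f (g y)) (f o) := dist_triangle _ _ _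
        _ ≤ q + (q * M + q) := by nlinarith
    · -- f '' (g '' T) is linearly equivalent to T
      have hmem1 : (0 : ℝ) ∈ {α : ℝ | 0 ≤ α ∧ ∃ a : ℝ, 0 ≤ a ∧
          T ⊆ cone (f o) (f '' (g '' T)) α a} := by
        refine ⟨le_refl _, q, hq.le, fun y hy => ?_⟩
        rw [mem_cone_iff]
        exact ⟨f (g y), mem_image_of_mem f (mem_image_of_mem g hy),
          by simpa using hg y⟩
      have hmem2 : (0 : ℝ) ∈ {α : ℝ | 0 ≤ α ∧ ∃ a : ℝ, 0 ≤ a ∧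
          (f '' (g '' T)) ⊆ cone (f o) T α a} := by
        refine ⟨le_refl _, q, hq.le, ?_⟩
        rintro _ ⟨_, ⟨y, hy, rfl⟩, rfl⟩
        rw [mem_cone_iff]
        refine ⟨y, hy, ?_⟩
        rw [dist_comm]
        simpa using hg y
      have e1 : sPlus (f o) (f '' (g '' T)) T = 0 :=
        le_antisymm (csInf_le ⟨0, fun _ h => h.1⟩ hmem1) (sPlus_nonneg' _ _ _)
      have e2 : sPlus (f o) T (f '' (g '' T)) = 0 :=
        le_antisymm (csInf_le ⟨0, fun _ h => h.1⟩ hmem2) (sPlus_nonneg' _ _ _)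
      simp [sFun, e1, e2]
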